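/- Let p : Σ_𝒳 → ℝ, let n₀ ≥ 1, and suppose that for every n ≥ n₀ there is a gamble b^n on 𝒩^n with p(θ) = Σ_{m∈𝒩^n} b^n(m)·B_m(θ) for all θ ∈ Σ_𝒳 (so p is a polynomial gamble of degree at most n₀). Then lim_{n→∞} min_{m∈𝒩^n} b^n(m) = min_{θ∈Σ_𝒳} p(θ) and lim_{n→∞} max_{m∈𝒩^n} b^n(m) = max_{θ∈Σ_𝒳} p(θ). -/

import Mathlib

open Finset Filter Topology

/-- A coherent lower prevision on the gambles over a finite nonempty space `Ω`. -/
def LowerPrevCoherent {Ω : Type*} [Fintype Ω] [Nonempty Ω] (P : (Ω → ℝ) → ℝ) : Prop :=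
  (∀ f : Ω → ℝ, sInf (Set.range f) ≤ P f) ∧
  (∀ (f : Ω → ℝ) (l : ℝ), 0 ≤ l → P (fun ω => l * f ω) = l * P f) ∧
  (∀ f g : Ω → ℝ, P f + P g ≤ P (f + g))

/-- A linear prevision on the gambles over a finite nonempty space `Ω`. -/
def LinearPrevision {Ω : Type*} [Fintype Ω] [Nonempty Ω] (P : (Ω → ℝ) → ℝ) : Prop :=
  (∀ f g : Ω → ℝ, P (f + g) = P f + P g) ∧
  (∀ (l : ℝ) (f : Ω → ℝ), P (fun ω => l * f ω) = l * P f) ∧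
  (∀ f : Ω → ℝ, (∀ ω, 0 ≤ f ω) → 0 ≤ P f) ∧
  P (fun _ => 1) = 1

/-- Exchangeability of a lower prevision on gambles on `X^N`:
`P (πf − f) ≥ 0` for every gamble `f` and every permutation `π`. -/
def Exchangeable {X : Type*} {N : ℕ} (P : ((Fin N → X) → ℝ) → ℝ) : Prop :=
  ∀ (f : (Fin N → X) → ℝ) (π : Equiv.Perm (Fin N)),
    0 ≤ P (fun x => f (fun k => x (π k)) - f x)

/-- The set of count vectors `𝒩^n`. -/
abbrev CVec (X : Type*) [Fintype X] (n : ℕ) : Type _ := {m : X → ℕ // ∑ x, m x = n}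

noncomputable instance {X : Type*} [Fintype X] [DecidableEq X] (n : ℕ) : Fintype (CVec X n) := by
  have key : ∀ (m : CVec X n) (x : X), m.1 x < n + 1 := by
    intro m x
    have h1 : m.1 x ≤ ∑ y, m.1 y :=
      Finset.single_le_sum (fun i _ => Nat.zero_le _) (Finset.mem_univ x)
    have h2 := m.2
    omega
  exact Fintype.ofInjective (fun m : CVec X n => fun x => (⟨m.1 x, key m x⟩ : Fin (n+1)))
    (fun a b hab => Subtype.ext (funext fun x => congrArg Fin.val (congrFun hab x)))

instance {X : Type*} [Fintype X] [DecidableEq X] [Nonempty X] (n : ℕ) :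
    Nonempty (CVec X n) :=
  ⟨⟨fun x => if x = Classical.arbitrary X then n else 0, by simp⟩⟩

/-- The counting map `T^n : X^n → 𝒩^n`. -/
def countMap {X : Type*} [Fintype X] [DecidableEq X] (n : ℕ) (z : Fin n → X) : CVec X n :=
  ⟨fun x => (Finset.univ.filter fun k => z k = x).card, by
    have h := Finset.card_eq_sum_card_fiberwise (f := z) (s := Finset.univ) (t := Finset.univ)
      (fun k _ => Finset.mem_univ (z k))
    simpa using h.symm⟩

/-- `ν(m) = n!/∏ₓ mₓ!` for a count vector `m ∈ 𝒩^n`. -/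
def nu {X : Type*} [Fintype X] {n : ℕ} (m : CVec X n) : ℕ :=
  Nat.multinomial Finset.univ m.1

/-- `ν(μ − m)`, which is `0` unless `m ≤ μ` componentwise. -/
def nuSub {X : Type*} [Fintype X] {n k : ℕ} (μ : CVec X (n + k)) (m : CVec X n) : ℕ :=
  if ∀ x, m.1 x ≤ μ.1 x then Nat.multinomial Finset.univ (fun x => μ.1 x - m.1 x) else 0

/-- The multiple hyper-geometric prevision `MuHy^n(f|m) = (1/ν(m)) ∑_{z∈[m]} f(z)`. -/
noncomputable def MuHy {X : Type*} [Fintype X] [DecidableEq X] {n : ℕ}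
    (f : (Fin n → X) → ℝ) (m : CVec X n) : ℝ :=
  (∑ z ∈ Finset.univ.filter fun z : Fin n → X => countMap n z = m, f z) / (nu m : ℝ)

/-- The `X`-simplex `Σ_X`, as a subtype of `X → ℝ`. -/
abbrev SimplexPt (X : Type*) [Fintype X] : Type _ :=
  {θ : X → ℝ // (∀ x, 0 ≤ θ x) ∧ ∑ x, θ x = 1}

/-- The Bernstein basis polynomial `B_m(θ) = ν(m) ∏ₓ θₓ^{mₓ}`. -/
noncomputable def Bern {X : Type*} [Fintype X] {n : ℕ} (m : CVec X n) (θ : X → ℝ) : ℝ :=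
  (nu m : ℝ) * ∏ x, θ x ^ m.1 x

/-- The count multinomial expectation `CoMn^n(g|θ) = ∑_m g(m) B_m(θ)`. -/
noncomputable def CoMn {X : Type*} [Fintype X] [DecidableEq X] {n : ℕ} (g : CVec X n → ℝ) (θ : X → ℝ) : ℝ :=
  ∑ m : CVec X n, g m * Bern m θ

/-- The multinomial expectation `Mn^n(f|θ) = ∑_z f(z) ∏ₓ θₓ^{Tₓ(z)}`. -/
noncomputable def Mn {X : Type*} [Fintype X] [DecidableEq X] {n : ℕ}
    (f : (Fin n → X) → ℝ) (θ : X → ℝ) : ℝ :=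
  ∑ z : Fin n → X, f z * ∏ x, θ x ^ (countMap n z).1 x

/-- `CoMn^n(g|·)` as a function on the simplex. -/
noncomputable def CoMnP {X : Type*} [Fintype X] [DecidableEq X] {n : ℕ} (g : CVec X n → ℝ)
    (θ : SimplexPt X) : ℝ :=
  CoMn g θ.1

/-- `Mn^n(f|·)` as a function on the simplex. -/
noncomputable def MnP {X : Type*} [Fintype X] [DecidableEq X] {n : ℕ}
    (f : (Fin n → X) → ℝ) (θ : SimplexPt X) : ℝ :=
  Mn f θ.1

/-- Polynomial gambles on the simplex: the set `𝒱(Σ_X)`. -/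
def IsPolyGamble {X : Type*} [Fintype X] [DecidableEq X] (p : SimplexPt X → ℝ) : Prop :=
  ∃ n : ℕ, 1 ≤ n ∧ ∃ g : CVec X n → ℝ, p = fun θ => CoMnP g θ

/-- Coherence of a functional on the linear space `𝒱(Σ_X)` of polynomial gambles. -/
def CoherentOnPoly {X : Type*} [Fintype X] [DecidableEq X] (S : (SimplexPt X → ℝ) → ℝ) : Prop :=
  (∀ p, IsPolyGamble p → sInf (Set.range p) ≤ S p) ∧
  (∀ p, IsPolyGamble p → ∀ l : ℝ, 0 ≤ l → S (fun θ => l * p θ) = l * S p) ∧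
  (∀ p q, IsPolyGamble p → IsPolyGamble q → S p + S q ≤ S (p + q))

/-- Cylindrical extension of a gamble on `X^n` to `X^{n+k}`. -/
def cylExt {X : Type*} {n k : ℕ} (f : (Fin n → X) → ℝ) : (Fin (n + k) → X) → ℝ :=
  fun z => f fun i => z (Fin.castLE (Nat.le_add_right n k) i)

/-- Time consistency of a family of lower previsions on the `X^n`. -/
def PTimeConsistent {X : Type*} (P : ∀ n : ℕ, ((Fin n → X) → ℝ) → ℝ) : Prop :=
  ∀ n : ℕ, 1 ≤ n → ∀ (k : ℕ) (f : (Fin n → X) → ℝ), P n f = P (n + k) (cylExt f)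

/-- Time consistency of a family of count lower previsions on the `𝒩^n`. -/
def QTimeConsistent {X : Type*} [Fintype X] [DecidableEq X] (Q : ∀ n : ℕ, (CVec X n → ℝ) → ℝ) : Prop :=
  ∀ n : ℕ, 1 ≤ n → ∀ (k : ℕ) (h : CVec X n → ℝ),
    Q n h = Q (n + k) (fun μ => ∑ m : CVec X n, ((nuSub μ m : ℝ) * (nu m : ℝ) / (nu μ : ℝ)) * h m)

/-- The relative frequency vector `m/n ∈ Σ_X` of a count vector `m ∈ 𝒩^n`, `n ≥ 1`. -/
noncomputable def freqPt {X : Type*} [Fintype X] {n : ℕ} (hn : 0 < n) (m : CVec X n) :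
    SimplexPt X :=
  ⟨fun x => (m.1 x : ℝ) / n,
   fun x => div_nonneg (Nat.cast_nonneg _) (Nat.cast_nonneg _),
   by
    rw [← Finset.sum_div]
    have h : (∑ x, (m.1 x : ℝ)) = (n : ℝ) := by exact_mod_cast m.2
    rw [h]
    exact div_self (Nat.cast_ne_zero.mpr hn.ne')⟩

/-- `ḡ(μ) = ∑_m (ν(m) ν(μ−m) / ν(μ)) g(m)`. -/
noncomputable def gbar {X : Type*} [Fintype X] [DecidableEq X] {n k : ℕ}
    (g : CVec X n → ℝ) (μ : CVec X (n + k)) : ℝ :=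
  ∑ m : CVec X n, ((nu m : ℝ) * (nuSub μ m : ℝ) / (nu μ : ℝ)) * g m


/-!
The Bernstein basis is nonnegative and sums to one on the simplex, so `p θ` is a convex
combination of the coefficients `b n`: `min b^n ≤ min p` and `max p ≤ max b^n`. Conversely,
Bernstein coefficients are unique, so `b^(n₀+k)` is the degree elevation of `b^n₀`:
`b^(n₀+k)(μ) = ∑ₘ b^n₀(m) ν(m) ν(μ - m) / ν(μ)`, an average of `b^n₀` under a multivariate
hypergeometric law. With `N = n₀ + k`, this law is within `O(n₀² / N)` of the multinomial law
with parameter `μ / N`, under which the average of `b^n₀` is `p (μ / N)`. Hence every coefficient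
`b^N(μ)` is within `O(1 / N)` of a value of `p`.
-/

theorem abs_prod_sub_prod_le_sum {ι : Type*} (s : Finset ι) {f g : ι → ℝ}
    (hf : ∀ i ∈ s, |f i| ≤ 1) (hg : ∀ i ∈ s, |g i| ≤ 1) :
    |∏ i ∈ s, f i - ∏ i ∈ s, g i| ≤ ∑ i ∈ s, |f i - g i| := by
  classical
  induction s using Finset.cons_induction with
  | empty => simp
  | cons j s hj ih =>
    simp only [mem_cons, forall_eq_or_imp] at hf hg
    have hfs : |∏ i ∈ s, f i| ≤ 1 := by
      rw [abs_prod]; exact prod_le_one (fun i _ => abs_nonneg _) hf.2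
    rw [prod_cons, prod_cons, sum_cons]
    calc |f j * ∏ i ∈ s, f i - g j * ∏ i ∈ s, g i|
        = |(f j - g j) * ∏ i ∈ s, f i + g j * (∏ i ∈ s, f i - ∏ i ∈ s, g i)| := by
          congr 1; ring
      _ ≤ |f j - g j| * |∏ i ∈ s, f i| + |g j| * |∏ i ∈ s, f i - ∏ i ∈ s, g i| := by
        rw [← abs_mul, ← abs_mul]; exact abs_add_le _ _
      _ ≤ |f j - g j| + ∑ i ∈ s, |f i - g i| :=
        add_le_add (mul_le_of_le_one_right (abs_nonneg _) hfs)
          ((mul_le_of_le_one_left (abs_nonneg _) hg.1).trans (ih hf.2 hg.2))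

theorem abs_descFactorial_div_pow_sub_le {a N : ℕ} (k : ℕ) (ha : a ≤ N) :
    |(a.descFactorial k : ℝ) / N ^ k - ((a : ℝ) / N) ^ k| ≤ k * k / N := by
  have hdesc :
      (a.descFactorial k : ℝ) / N ^ k = ∏ i ∈ range k, ((a - i : ℕ) : ℝ) / N := by
    rw [Nat.descFactorial_eq_prod_range, Nat.cast_prod, prod_div_distrib, prod_const, card_range]
  have hpow : ((a : ℝ) / N) ^ k = ∏ _i ∈ range k, (a : ℝ) / N := by
    rw [prod_const, card_range]
  have hfrac : (a : ℝ) / N ≤ 1 := div_le_one_of_le₀ (by exact_mod_cast ha) (Nat.cast_nonneg _)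
  have hsub : ∀ i, ((a - i : ℕ) : ℝ) / N ≤ (a : ℝ) / N := fun i => by
    gcongr; exact_mod_cast Nat.sub_le a i
  rw [hdesc, hpow]
  calc |∏ i ∈ range k, ((a - i : ℕ) : ℝ) / N - ∏ _i ∈ range k, (a : ℝ) / N|
      ≤ ∑ i ∈ range k, |((a - i : ℕ) : ℝ) / N - (a : ℝ) / N| :=
        abs_prod_sub_prod_le_sum _
          (fun i _ => (abs_of_nonneg (by positivity)).trans_le ((hsub i).trans hfrac))
          (fun _ _ => (abs_of_nonneg (by positivity)).trans_le hfrac)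
    _ ≤ ∑ _i ∈ range k, (k : ℝ) / N := by
        refine sum_le_sum fun i hi => ?_
        rw [abs_sub_comm, abs_of_nonneg (sub_nonneg.2 (hsub i)), ← sub_div]
        have : (a : ℝ) ≤ ((a - i : ℕ) : ℝ) + k := by
          exact_mod_cast (show a ≤ a - i + k by have := mem_range.1 hi; omega)
        gcongr
        linarith
    _ = k * k / N := by rw [sum_const, card_range, nsmul_eq_mul, mul_div_assoc]

theorem abs_div_sub_le_of_abs_sub_le {u v r ε : ℝ} (hu₀ : 0 ≤ u) (hu₁ : u ≤ 1)
    (huv : |u - v| ≤ ε) (hr : |1 - r| ≤ ε) (hε : ε ≤ 1 / 2) : |u / r - v| ≤ 3 * ε := by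
  have hr₀ : 1 / 2 ≤ r := by linarith [(abs_le.1 hr).2]
  have hsplit : u / r - v = (u - v) + u * (1 - r) / r := by field_simp; ring
  have hcorr : |u * (1 - r) / r| ≤ 2 * ε := by
    rw [abs_div, abs_mul, abs_of_nonneg hu₀, abs_of_pos (a := r) (by linarith),
      div_le_iff₀ (by linarith)]
    nlinarith [abs_nonneg (1 - r), mul_le_of_le_one_left (abs_nonneg (1 - r)) hu₁]
  rw [hsplit]
  linarith [abs_add_le (u - v) (u * (1 - r) / r)]

theorem tendsto_sInf_range_of_forall_abs_sub_le {S : Type*} [Nonempty S] {ι : ℕ → Type*}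
    [∀ n, Finite (ι n)] [∀ n, Nonempty (ι n)] (p : S → ℝ) (f : ∀ n, ι n → ℝ)
    {ε : ℕ → ℝ} (hε : Tendsto ε atTop (𝓝 0))
    (hle : ∀ᶠ n in atTop, ∀ θ, sInf (Set.range (f n)) ≤ p θ)
    (happrox : ∀ᶠ n in atTop, ∀ i, ∃ θ, |f n i - p θ| ≤ ε n) :
    Tendsto (fun n => sInf (Set.range (f n))) atTop (𝓝 (sInf (Set.range p))) := by
  obtain ⟨n₁, hn₁⟩ := hle.exists
  have hbdd : BddBelow (Set.range p) := ⟨_, Set.forall_mem_range.2 hn₁⟩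
  have hlower : Tendsto (fun n => sInf (Set.range p) - ε n) atTop (𝓝 (sInf (Set.range p))) := by
    simpa using tendsto_const_nhds.sub hε
  refine tendsto_of_tendsto_of_tendsto_of_le_of_le' hlower tendsto_const_nhds ?_ ?_
  · filter_upwards [happrox] with n hn
    obtain ⟨i, hi⟩ := (Set.range_nonempty (f n)).csInf_mem (Set.finite_range _)
    obtain ⟨θ, hθ⟩ := hn i
    have := csInf_le hbdd (Set.mem_range_self θ)
    rw [← hi]
    linarith [(abs_le.1 hθ).1]
  · filter_upwards [hle] with n hn
    exact le_csInf (Set.range_nonempty p) (Set.forall_mem_range.2 hn)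

section Bernstein

variable {X : Type*} [Fintype X]

theorem CVec.apply_le {n : ℕ} (m : CVec X n) (x : X) : m.1 x ≤ n :=
  (single_le_sum (f := m.1) (fun _ _ => Nat.zero_le _) (mem_univ x)).trans_eq m.2

theorem nu_pos {n : ℕ} (m : CVec X n) : 0 < nu m := Nat.multinomial_pos _ _

theorem CVec.prod_div_pow {n : ℕ} (m : CVec X n) (t : X → ℝ) (S : ℝ) :
    ∏ x, (t x / S) ^ m.1 x = (∏ x, t x ^ m.1 x) / S ^ n := by
  simp_rw [div_pow]
  rw [prod_div_distrib, prod_pow_eq_pow_sum, m.2]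

theorem bern_nonneg {n : ℕ} (m : CVec X n) (θ : SimplexPt X) : 0 ≤ Bern m θ.1 :=
  mul_nonneg (Nat.cast_nonneg _) (prod_nonneg fun x _ => pow_nonneg (θ.2.1 x) _)

variable [DecidableEq X]

theorem sum_nu_mul_prod_pow (θ : X → ℝ) (n : ℕ) :
    ∑ m : CVec X n, (nu m : ℝ) * ∏ x, θ x ^ m.1 x = (∑ x, θ x) ^ n := by
  rw [sum_pow_eq_sum_piAntidiag,
    sum_subtype _ (p := fun f : X → ℕ => ∑ x, f x = n) (fun f => by simp [mem_piAntidiag])]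
  rfl

theorem sum_bern (n : ℕ) (θ : SimplexPt X) : ∑ m : CVec X n, Bern m θ.1 = 1 := by
  simp only [Bern, sum_nu_mul_prod_pow, θ.2.2, one_pow]

theorem sInf_range_le_coMn {n : ℕ} (g : CVec X n → ℝ) (θ : SimplexPt X) :
    sInf (Set.range g) ≤ CoMn g θ.1 :=
  calc sInf (Set.range g) = ∑ m, sInf (Set.range g) * Bern m θ.1 := by
        rw [← mul_sum, sum_bern, mul_one]
    _ ≤ CoMn g θ.1 := sum_le_sum fun m _ => mul_le_mul_of_nonneg_right
        (csInf_le (Set.finite_range g).bddBelow (Set.mem_range_self m)) (bern_nonneg m θ)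

theorem coMn_neg {n : ℕ} (g : CVec X n → ℝ) (θ : X → ℝ) : CoMn (-g) θ = -CoMn g θ := by
  simp only [CoMn, Pi.neg_apply, neg_mul, sum_neg_distrib]

theorem coMn_sub {n : ℕ} (g h : CVec X n → ℝ) (θ : X → ℝ) :
    CoMn (g - h) θ = CoMn g θ - CoMn h θ := by
  simp only [CoMn, Pi.sub_apply, sub_mul, sum_sub_distrib]

variable [Nonempty X]

/-- By homogeneity, `∑ₘ c m ν(m) tᵐ` vanishes on the positive orthant, hence is the zero
polynomial; its monomials `tᵐ` are distinct. -/
theorem eq_zero_of_coMn_eq_zero {n : ℕ} {c : CVec X n → ℝ}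
    (hc : ∀ θ : SimplexPt X, CoMn c θ.1 = 0) : c = 0 := by
  let mon : CVec X n → X →₀ ℕ := fun m => Finsupp.equivFunOnFinite.symm m.1
  have hmon : Function.Injective mon := fun a b hab =>
    Subtype.ext (Finsupp.equivFunOnFinite.symm.injective hab)
  let P : MvPolynomial X ℝ := ∑ m, MvPolynomial.monomial (mon m) (c m * nu m)
  have heval :
      ∀ t : X → ℝ, MvPolynomial.eval t P = ∑ m, c m * (nu m * ∏ x, t x ^ m.1 x) := by
    intro t
    simp only [P, map_sum, MvPolynomial.eval_monomial,
      Finsupp.prod_fintype _ _ (fun _ => pow_zero _)]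
    exact sum_congr rfl fun m _ => by simp [mon, mul_assoc]
  have hP : P = 0 := by
    refine MvPolynomial.funext_set (fun _ => Set.Ioi 0) (fun _ => Set.Ioi_infinite 0) fun t ht => ?_
    have hS : 0 < ∑ x, t x := sum_pos (fun x _ => ht x trivial) univ_nonempty
    let θ : SimplexPt X := ⟨fun x => t x / ∑ y, t y, fun x => (div_pos (ht x trivial) hS).le,
      by rw [← sum_div, div_self hS.ne']⟩
    have hθ := hc θ
    simp only [CoMn, Bern, θ, CVec.prod_div_pow, ← mul_div_assoc, ← sum_div,
      div_eq_zero_iff, pow_eq_zero_iff', hS.ne', false_and, or_false] at hθ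
    rw [heval, hθ, map_zero]
  funext m
  have hcoeff := congrArg (MvPolynomial.coeff (mon m)) hP
  simp only [P, MvPolynomial.coeff_sum, MvPolynomial.coeff_monomial, hmon.eq_iff,
    sum_ite_eq', mem_univ, if_true, MvPolynomial.coeff_zero] at hcoeff
  exact (mul_eq_zero.1 hcoeff).resolve_right (Nat.cast_ne_zero.2 (nu_pos m).ne')

theorem eq_of_coMn_eq {n : ℕ} {c d : CVec X n → ℝ}
    (h : ∀ θ : SimplexPt X, CoMn c θ.1 = CoMn d θ.1) : c = d :=
  sub_eq_zero.1 (eq_zero_of_coMn_eq_zero fun θ => by rw [coMn_sub, h, sub_self])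

end Bernstein

section Elevation

variable {X : Type*} [Fintype X] [DecidableEq X]

theorem sum_nuSub_mul_prod_pow {n k : ℕ} (m : CVec X n) (θ : X → ℝ) :
    ∑ μ : CVec X (n + k), (nuSub μ m : ℝ) * ∏ x, θ x ^ μ.1 x
      = (∏ x, θ x ^ m.1 x) * (∑ x, θ x) ^ k := by
  let shift : CVec X k → CVec X (n + k) :=
    fun l => ⟨m.1 + l.1, by simp only [Pi.add_apply, sum_add_distrib, m.2, l.2]⟩
  have hshift : Function.Injective shift := fun l l' h =>
    Subtype.ext (add_left_cancel (congrArg Subtype.val h))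
  rw [← sum_nu_mul_prod_pow, mul_sum]
  symm
  refine Fintype.sum_of_injective shift hshift _ _ (fun μ hμ => ?_) (fun l => ?_)
  · have hsub : ¬∀ x, m.1 x ≤ μ.1 x := fun hle => hμ
      ⟨⟨μ.1 - m.1, by simp only [Pi.sub_apply, sum_tsub_distrib _ fun x _ => hle x, μ.2, m.2,
        Nat.add_sub_cancel_left]⟩, Subtype.ext (funext fun x => by simp [shift, hle x])⟩
    simp [nuSub, hsub]
  · simp [nuSub, shift, nu, pow_add, prod_mul_distrib, mul_left_comm]

theorem coMn_gbar {n k : ℕ} (g : CVec X n → ℝ) (θ : SimplexPt X) :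
    CoMn (gbar g : CVec X (n + k) → ℝ) θ.1 = CoMn g θ.1 := by
  have hν : ∀ μ : CVec X (n + k), (nu μ : ℝ) ≠ 0 := fun μ =>
    Nat.cast_ne_zero.2 (nu_pos μ).ne'
  calc CoMn (gbar g : CVec X (n + k) → ℝ) θ.1
      = ∑ m, g m * nu m *
          ∑ μ : CVec X (n + k), (nuSub μ m : ℝ) * ∏ x, θ.1 x ^ μ.1 x := by
        simp only [CoMn, gbar, Bern, sum_mul, mul_sum]
        rw [sum_comm]
        refine sum_congr rfl fun m _ => sum_congr rfl fun μ _ => ?_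
        field_simp [hν μ]
    _ = CoMn g θ.1 := by
        simp only [sum_nuSub_mul_prod_pow, θ.2.2, one_pow, mul_one, CoMn, Bern, mul_assoc]

end Elevation

section Estimates

variable {X : Type*} [Fintype X]

/-- Both sides are `(n + k)! / ∏ₓ (μₓ - mₓ)!` if `m ≤ μ`, and `0` otherwise. -/
theorem nuSub_mul_descFactorial {n k : ℕ} (μ : CVec X (n + k)) (m : CVec X n) :
    nuSub μ m * (n + k).descFactorial n = nu μ * ∏ x, (μ.1 x).descFactorial (m.1 x) := by
  by_cases hle : ∀ x, m.1 x ≤ μ.1 x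
  swap
  · obtain ⟨x, hx⟩ := not_forall.1 hle
    rw [nuSub, if_neg hle, zero_mul,
      prod_eq_zero (mem_univ x) (Nat.descFactorial_eq_zero_iff_lt.2 (not_le.1 hx)), mul_zero]
  set F := ∏ x, (μ.1 x - m.1 x).factorial
  have hrest : F * nuSub μ m = k.factorial := by
    rw [nuSub, if_pos hle, Nat.multinomial_spec,
      sum_tsub_distrib _ fun x _ => hle x, μ.2, m.2, Nat.add_sub_cancel_left]
  have htotal : (∏ x, (μ.1 x).factorial) * nu μ = (n + k).factorial := by
    rw [nu, Nat.multinomial_spec, μ.2]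
  have hfall : k.factorial * (n + k).descFactorial n = (n + k).factorial := by
    simpa using Nat.factorial_mul_descFactorial (Nat.le_add_right n k)
  have hsplit : ∏ x, (μ.1 x).factorial = F * ∏ x, (μ.1 x).descFactorial (m.1 x) := by
    rw [← prod_mul_distrib]
    exact prod_congr rfl fun x _ => (Nat.factorial_mul_descFactorial (hle x)).symm
  have hF : 0 < F := prod_pos fun x _ => Nat.factorial_pos _
  refine Nat.eq_of_mul_eq_mul_left (Nat.mul_pos hF (Nat.factorial_pos k)) ?_
  calc F * k.factorial * (nuSub μ m * (n + k).descFactorial n)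
      = (F * nuSub μ m) * (k.factorial * (n + k).descFactorial n) := by ring
    _ = k.factorial * ((∏ x, (μ.1 x).factorial) * nu μ) := by rw [hrest, hfall, htotal]
    _ = F * k.factorial * (nu μ * ∏ x, (μ.1 x).descFactorial (m.1 x)) := by rw [hsplit]; ring

theorem abs_nuSub_div_nu_sub_prod_le {n k : ℕ} (hN : 0 < n + k) (hlarge : 2 * n ^ 2 ≤ n + k)
    (μ : CVec X (n + k)) (m : CVec X n) :
    |(nuSub μ m : ℝ) / nu μ - ∏ x, ((μ.1 x : ℝ) / (n + k : ℕ)) ^ m.1 x|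
      ≤ 3 * ((n : ℝ) ^ 2 / (n + k : ℕ)) := by
  set N : ℝ := ((n + k : ℕ) : ℝ) with hNdef
  have hN₀ : 0 < N := by rw [hNdef]; exact_mod_cast hN
  have hμ : ∀ x, μ.1 x ≤ n + k := μ.apply_le
  have hfrac : ∀ x, 0 ≤ (μ.1 x : ℝ) / N ∧ (μ.1 x : ℝ) / N ≤ 1 := fun x =>
    ⟨by positivity, div_le_one_of_le₀ (by rw [hNdef]; exact_mod_cast hμ x) hN₀.le⟩
  have hdesc : ∀ x, 0 ≤ ((μ.1 x).descFactorial (m.1 x) : ℝ) / N ^ m.1 x ∧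
      ((μ.1 x).descFactorial (m.1 x) : ℝ) / N ^ m.1 x ≤ 1 := fun x => by
    refine ⟨by positivity, div_le_one_of_le₀ ?_ (by positivity)⟩
    rw [hNdef]
    exact_mod_cast (Nat.descFactorial_le_pow _ _).trans (Nat.pow_le_pow_left (hμ x) _)
  have hratio : (nuSub μ m : ℝ) / nu μ
      = (∏ x, ((μ.1 x).descFactorial (m.1 x) : ℝ) / N ^ m.1 x)
        / (((n + k).descFactorial n : ℝ) / N ^ n) := by
    rw [prod_div_distrib, prod_pow_eq_pow_sum, m.2, div_div_div_cancel_right₀ (by positivity),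
      div_eq_div_iff (by exact_mod_cast (nu_pos μ).ne')
        (by exact_mod_cast (Nat.descFactorial_pos.2 (Nat.le_add_right n k)).ne')]
    exact_mod_cast (nuSub_mul_descFactorial μ m).trans (mul_comm _ _)
  have hprod : |∏ x, ((μ.1 x).descFactorial (m.1 x) : ℝ) / N ^ m.1 x
      - ∏ x, ((μ.1 x : ℝ) / N) ^ m.1 x| ≤ (n : ℝ) ^ 2 / N :=
    calc _ ≤ ∑ x, |((μ.1 x).descFactorial (m.1 x) : ℝ) / N ^ m.1 x
            - ((μ.1 x : ℝ) / N) ^ m.1 x| :=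
          abs_prod_sub_prod_le_sum _ (fun x _ => (abs_of_nonneg (hdesc x).1).trans_le (hdesc x).2)
            fun x _ => (abs_of_nonneg (pow_nonneg (hfrac x).1 _)).trans_le
              (pow_le_one₀ (hfrac x).1 (hfrac x).2)
      _ ≤ ∑ x, (n : ℝ) * m.1 x / N := sum_le_sum fun x _ =>
          (abs_descFactorial_div_pow_sub_le _ (hμ x)).trans
            (by gcongr; exact_mod_cast m.apply_le x)
      _ = (n : ℝ) ^ 2 / N := by
          rw [← sum_div, ← mul_sum, ← Nat.cast_sum, m.2, sq]
  have hfall : |1 - ((n + k).descFactorial n : ℝ) / N ^ n| ≤ (n : ℝ) ^ 2 / N := by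
    rw [abs_sub_comm, ← one_pow n, ← div_self hN₀.ne', sq]
    exact abs_descFactorial_div_pow_sub_le n le_rfl
  have hsmall : (n : ℝ) ^ 2 / N ≤ 1 / 2 := by
    rw [div_le_iff₀ hN₀]
    have : (2 * n ^ 2 : ℝ) ≤ N := by rw [hNdef]; exact_mod_cast hlarge
    linarith
  rw [hratio]
  exact abs_div_sub_le_of_abs_sub_le (prod_nonneg fun x _ => (hdesc x).1)
    (prod_le_one (fun x _ => (hdesc x).1) fun x _ => (hdesc x).2) hprod hfall hsmall

variable [DecidableEq X]

theorem abs_gbar_sub_coMn_freqPt_le {n k : ℕ} (hN : 0 < n + k) (hlarge : 2 * n ^ 2 ≤ n + k)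
    (g : CVec X n → ℝ) (μ : CVec X (n + k)) :
    |gbar g μ - CoMn g (freqPt hN μ).1|
      ≤ (∑ m, (nu m : ℝ) * |g m|) * (3 * ((n : ℝ) ^ 2 / (n + k : ℕ))) := by
  have hdiff : gbar g μ - CoMn g (freqPt hN μ).1 = ∑ m, (nu m * g m) *
      ((nuSub μ m : ℝ) / nu μ - ∏ x, ((μ.1 x : ℝ) / (n + k : ℕ)) ^ m.1 x) := by
    simp only [gbar, CoMn, Bern, freqPt, ← sum_sub_distrib]
    exact sum_congr rfl fun m _ => by ring
  rw [hdiff, sum_mul]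
  refine (abs_sum_le_sum_abs _ _).trans (sum_le_sum fun m _ => ?_)
  rw [abs_mul, abs_mul, Nat.abs_cast]
  exact mul_le_mul_of_nonneg_left (abs_nuSub_div_nu_sub_prod_le hN hlarge μ m) (by positivity)

end Estimates

section Convergence

theorem Set.range_neg_eq {α β : Type*} [InvolutiveNeg β] (f : α → β) :
    Set.range (-f) = -Set.range f := by
  ext; simp [neg_eq_iff_eq_neg]

variable {X : Type*} [Fintype X] [DecidableEq X] [Nonempty X]

instance : Nonempty (SimplexPt X) :=
  ⟨⟨Pi.single (Classical.arbitrary X) 1,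
    fun x => by simp [Pi.single_apply]; split_ifs <;> norm_num, by simp⟩⟩

theorem tendsto_sInf_range_of_coMnP_eq (p : SimplexPt X → ℝ) (n₀ : ℕ)
    (b : ∀ n : ℕ, CVec X n → ℝ)
    (hb : ∀ n : ℕ, n₀ ≤ n → ∀ θ : SimplexPt X, p θ = CoMnP (b n) θ) :
    Tendsto (fun n : ℕ => sInf (Set.range (b n))) atTop (𝓝 (sInf (Set.range p))) := by
  refine tendsto_sInf_range_of_forall_abs_sub_le p b
    (tendsto_const_div_atTop_nhds_zero_nat ((∑ m, (nu m : ℝ) * |b n₀ m|) * (3 * n₀ ^ 2)))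
    ?_ ?_
  · filter_upwards [eventually_ge_atTop n₀] with n hn θ
    rw [hb n hn θ]
    exact sInf_range_le_coMn (b n) θ
  · filter_upwards [eventually_ge_atTop (n₀ + 2 * n₀ ^ 2 + 1)] with n hn
    obtain ⟨k, rfl⟩ := Nat.exists_eq_add_of_le (show n₀ ≤ n by omega)
    have hN : 0 < n₀ + k := by omega
    have helev : b (n₀ + k) = gbar (b n₀) := eq_of_coMn_eq fun θ => by
      rw [coMn_gbar, ← CoMnP, ← CoMnP, ← hb _ le_rfl, ← hb _ (Nat.le_add_right n₀ k)]
    refine fun μ => ⟨freqPt hN μ, ?_⟩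
    rw [helev, hb n₀ le_rfl, CoMnP, mul_div_assoc, mul_div_assoc]
    exact abs_gbar_sub_coMn_freqPt_le hN (by omega) (b n₀) μ

end Convergence

theorem stmt19_general {X : Type*} [Fintype X] [DecidableEq X] [Nonempty X]
    (p : SimplexPt X → ℝ) (n₀ : ℕ)
    (b : ∀ n : ℕ, CVec X n → ℝ)
    (hb : ∀ n : ℕ, n₀ ≤ n → ∀ θ : SimplexPt X, p θ = CoMnP (b n) θ) :
    Tendsto (fun n : ℕ => sInf (Set.range (b n))) atTop (𝓝 (sInf (Set.range p))) ∧
    Tendsto (fun n : ℕ => sSup (Set.range (b n))) atTop (𝓝 (sSup (Set.range p))) := by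
  refine ⟨tendsto_sInf_range_of_coMnP_eq p n₀ b hb, ?_⟩
  have hneg := (tendsto_sInf_range_of_coMnP_eq (-p) n₀ (-b) fun n hn θ => by
    rw [Pi.neg_apply, hb n hn θ, CoMnP, CoMnP, Pi.neg_apply, coMn_neg]).neg
  simpa only [Pi.neg_apply, Set.range_neg_eq, Real.sInf_neg, neg_neg] using hneg

/-- the minimal and maximal Bernstein coefficients of a polynomial gamble `p`
converge, as the degree goes to infinity, to the minimum and maximum of `p` on the
simplex. -/
theorem stmt19 {X : Type*} [Fintype X] [DecidableEq X] [Nonempty X]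
    (p : SimplexPt X → ℝ) (n₀ : ℕ) (hn₀ : 1 ≤ n₀)
    (b : ∀ n : ℕ, CVec X n → ℝ)
    (hb : ∀ n : ℕ, n₀ ≤ n → ∀ θ : SimplexPt X, p θ = CoMnP (b n) θ) :
    Tendsto (fun n : ℕ => sInf (Set.range (b n))) atTop (𝓝 (sInf (Set.range p))) ∧
    Tendsto (fun n : ℕ => sSup (Set.range (b n))) atTop (𝓝 (sSup (Set.range p))) :=
  stmt19_general p n₀ b hb
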